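/- (Ramras) Let k ≥ 1 and n = 2^k. Every subset y ⊆ [n−1] can be written as y = x ∆ [i] for a unique pair (x, i) with x ∈ ⟨B_k⟩ and 0 ≤ i ≤ n−1. Equivalently, the vertex sets of the isometric paths P(x) of length n−1, for x ∈ ⟨B_k⟩, partition the vertex set of the hypercube Q_{n−1}. -/

import Mathlib

open scoped symmDiff

/-- `B_1 = ∅` and `B_k = B_{k−1} ∪ {{j, 2^{k−1}+j} : 1 ≤ j ≤ 2^{k−1}−1}` for `k ≥ 2`. -/
def Bk : ℕ → Finset (Finset ℕ)
  | 0 => ∅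
  | 1 => ∅
  | (k + 2) =>
      Bk (k + 1) ∪
        (Finset.Icc 1 (2 ^ (k + 1) - 1)).image (fun j => ({j, 2 ^ (k + 1) + j} : Finset ℕ))

/-- The span of a family `X` of subsets under symmetric difference: all symmetric
differences `x_1 ∆ ⋯ ∆ x_t` of members of `X` (with `t = 0` giving `∅`). -/
def spanSD (X : Finset (Finset ℕ)) : Set (Finset ℕ) :=
  {y | ∃ l : List (Finset ℕ), (∀ s ∈ l, s ∈ X) ∧ l.foldr (· ∆ ·) ∅ = y}

open Finset

instance : Std.Commutative (fun (a b : Finset ℕ) => a ∆ b) := ⟨symmDiff_comm⟩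
instance : Std.Associative (fun (a b : Finset ℕ) => a ∆ b) := ⟨symmDiff_assoc⟩

noncomputable def sdFold (S : Finset (Finset ℕ)) : Finset ℕ := S.fold (· ∆ ·) ∅ id

noncomputable def spanFin (X : Finset (Finset ℕ)) : Finset (Finset ℕ) :=
  X.powerset.image sdFold

lemma foldr_sd_eq (l : List (Finset ℕ)) (b : Finset ℕ) :
    l.foldr (· ∆ ·) b = l.foldr (· ∆ ·) ∅ ∆ b := by
  induction l with
  | nil => simp only [List.foldr]; rw [show (∅:Finset ℕ) = ⊥ from rfl, bot_symmDiff]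
  | cons s l ih => simp only [List.foldr, ih, symmDiff_assoc]

lemma empty_mem_spanSD (X : Finset (Finset ℕ)) : ∅ ∈ spanSD X := ⟨[], by simp, rfl⟩

lemma mem_spanSD_of_mem {X : Finset (Finset ℕ)} {s : Finset ℕ} (h : s ∈ X) :
    s ∈ spanSD X := ⟨[s], by simp [h], by simp⟩

lemma symmDiff_mem_spanSD {X : Finset (Finset ℕ)} {x y : Finset ℕ}
    (hx : x ∈ spanSD X) (hy : y ∈ spanSD X) : x ∆ y ∈ spanSD X := by
  obtain ⟨l1, hl1, rfl⟩ := hx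
  obtain ⟨l2, hl2, rfl⟩ := hy
  refine ⟨l1 ++ l2, ?_, ?_⟩
  · intro s hs; rcases List.mem_append.1 hs with h | h
    exacts [hl1 s h, hl2 s h]
  · rw [List.foldr_append, foldr_sd_eq]

lemma spanSD_mono {X Y : Finset (Finset ℕ)} (h : X ⊆ Y) : spanSD X ⊆ spanSD Y := by
  rintro y ⟨l, hl, rfl⟩
  exact ⟨l, fun s hs => h (hl s hs), rfl⟩

lemma spanSD_subset_spanFin (X : Finset (Finset ℕ)) : spanSD X ⊆ ↑(spanFin X) := by
  rintro y ⟨l, hl, rfl⟩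
  induction l with
  | nil => exact Finset.mem_coe.2 (Finset.mem_image.2 ⟨∅, by simp, by simp [sdFold]⟩)
  | cons s l ih =>
    have hs : s ∈ X := hl s (by simp)
    obtain ⟨S, hSX, hSf⟩ := Finset.mem_image.1 (Finset.mem_coe.1 (ih (fun t ht => hl t (by simp [ht]))))
    rw [Finset.mem_powerset] at hSX
    by_cases hsS : s ∈ S
    · refine Finset.mem_coe.2 (Finset.mem_image.2 ⟨S.erase s, Finset.mem_powerset.2
        ((Finset.erase_subset s S).trans hSX), ?_⟩)
      have : sdFold S = s ∆ sdFold (S.erase s) := by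
        conv_lhs => rw [← Finset.insert_erase hsS]
        rw [sdFold, Finset.fold_insert (Finset.notMem_erase s S)]
        rfl
      show sdFold (S.erase s) = s ∆ l.foldr (· ∆ ·) ∅
      rw [← hSf, this, symmDiff_symmDiff_cancel_left]
    · refine Finset.mem_coe.2 (Finset.mem_image.2 ⟨insert s S, Finset.mem_powerset.2
        (Finset.insert_subset hs hSX), ?_⟩)
      show sdFold (insert s S) = s ∆ l.foldr (· ∆ ·) ∅
      rw [← hSf, sdFold, Finset.fold_insert hsS]
      rfl

lemma sdFold_subset {S : Finset (Finset ℕ)} {U : Finset ℕ}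
    (h : ∀ s ∈ S, s ⊆ U) : sdFold S ⊆ U := by
  classical
  induction S using Finset.induction_on with
  | empty => simp [sdFold]
  | @insert s S hsS ih =>
    rw [sdFold, Finset.fold_insert hsS]
    have h1 : s ⊆ U := h s (by simp)
    have h2 : sdFold S ⊆ U := ih (fun t ht => h t (by simp [ht]))
    exact (symmDiff_le_sup (a := s)).trans (Finset.union_subset h1 h2)

noncomputable def gfold (m : ℕ) (S : Finset ℕ) : Finset ℕ :=
  S.fold (· ∆ ·) ∅ (fun j => {j, m + j})

lemma gfold_eq {m : ℕ} (hm : 1 ≤ m) (S : Finset ℕ) (hsub : S ⊆ Icc 1 (m-1)) :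
    gfold m S = S ∪ S.image (m + ·) := by
  classical
  induction S using Finset.induction_on with
  | empty => simp [gfold]
  | @insert a S haS ih =>
    have ha : 1 ≤ a ∧ a ≤ m - 1 := mem_Icc.1 (hsub (mem_insert_self a S))
    have hS : S ⊆ Icc 1 (m-1) := (Finset.subset_insert a S).trans hsub
    have hb : ∀ s ∈ S, 1 ≤ s ∧ s ≤ m - 1 := fun s hs => mem_Icc.1 (hS hs)
    rw [gfold, Finset.fold_insert haS, ← gfold, ih hS]
    have hdisj : Disjoint ({a, m + a} : Finset ℕ) (S ∪ S.image (m + ·)) := by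
      rw [Finset.disjoint_left]
      intro x hx hx'
      rcases Finset.mem_insert.1 hx with rfl | hx
      · rcases Finset.mem_union.1 hx' with h | h
        · exact haS h
        · obtain ⟨s, hs, hse⟩ := Finset.mem_image.1 h
          have := hb s hs; omega
      · rw [Finset.mem_singleton] at hx; subst hx
        rcases Finset.mem_union.1 hx' with h | h
        · have := hb (m + a) h; omega
        · obtain ⟨s, hs, hse⟩ := Finset.mem_image.1 h
          have : s = a := by omega
          subst this; exact haS hs
    rw [hdisj.symmDiff_eq_sup]
    rw [Finset.image_insert]
    ext x
    simp only [Finset.sup_eq_union, Finset.mem_union, Finset.mem_insert,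
      Finset.mem_singleton, Finset.mem_image]
    tauto

lemma gfold_mem {k : ℕ} {S : Finset ℕ} (h : S ⊆ Icc 1 (2^(k+1) - 1)) :
    gfold (2^(k+1)) S ∈ spanSD (Bk (k+2)) := by
  classical
  induction S using Finset.induction_on with
  | empty => simpa [gfold] using empty_mem_spanSD (Bk (k+2))
  | @insert a S haS ih =>
    have ha : a ∈ Icc 1 (2^(k+1) - 1) := h (mem_insert_self a S)
    have hS : S ⊆ Icc 1 (2^(k+1) - 1) := (Finset.subset_insert a S).trans h
    rw [gfold, Finset.fold_insert haS, ← gfold]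
    refine symmDiff_mem_spanSD (mem_spanSD_of_mem ?_) (ih hS)
    show _ ∈ Bk (k+2)
    rw [show Bk (k+2) = Bk (k + 1) ∪
        (Finset.Icc 1 (2 ^ (k + 1) - 1)).image (fun j => ({j, 2 ^ (k + 1) + j} : Finset ℕ)) from rfl]
    exact Finset.mem_union_right _ (Finset.mem_image.2 ⟨a, ha, rfl⟩)

lemma sdalg (a b c : Finset ℕ) : (a ∆ b) ∆ (c ∆ a) = c ∆ b := by
  ext x; simp only [Finset.mem_symmDiff]; tauto

lemma sdalg2 (a b c : Finset ℕ) : a ∆ (b ∆ c) = (a ∆ c) ∆ b := by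
  rw [symmDiff_comm b c, ← symmDiff_assoc]

lemma exists_rep : ∀ k : ℕ, ∀ y : Finset ℕ, y ⊆ Icc 1 (2^(k+1) - 1) →
    ∃ x ∈ spanSD (Bk (k+1)), ∃ i ≤ 2^(k+1) - 1, y = x ∆ Icc 1 i := by
  intro k
  induction k with
  | zero =>
    intro y hy
    have h1 : y ⊆ ({1} : Finset ℕ) := by
      intro a ha; have := mem_Icc.1 (hy ha); simp; omega
    rcases Finset.subset_singleton_iff.1 h1 with rfl | rfl
    · exact ⟨∅, empty_mem_spanSD _, 0, by norm_num, by simp⟩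
    · refine ⟨∅, empty_mem_spanSD _, 1, by norm_num, ?_⟩
      rw [show (∅:Finset ℕ) = ⊥ from rfl, bot_symmDiff]
      simp
  | succ k ih =>
    intro y hy
    set m := 2^(k+1) with hm
    have hm1 : 1 ≤ m := Nat.one_le_two_pow
    have hN : 2^(k+2) = 2*m := by rw [hm]; ring
    have hyb : ∀ a ∈ y, 1 ≤ a ∧ a ≤ 2*m - 1 := by
      intro a ha; have := mem_Icc.1 (hy ha); omega
    set A := y ∩ Icc 1 (m-1) with hA
    set H := y ∩ Icc (m+1) (2*m - 1) with hH
    set H' := H.image (· - m) with hH'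
    have hHb : ∀ b ∈ H, m + 1 ≤ b ∧ b ≤ 2*m - 1 := by
      intro b hb; exact mem_Icc.1 (Finset.mem_of_mem_inter_right hb)
    have hH'sub : H' ⊆ Icc 1 (m-1) := by
      intro x hx
      obtain ⟨b, hb, rfl⟩ := Finset.mem_image.1 hx
      have := hHb b hb; rw [mem_Icc]; omega
    have hAsub : A ⊆ Icc 1 (m-1) := Finset.inter_subset_right
    have himg : H'.image (m + ·) = H := by
      rw [hH', Finset.image_image]
      rw [show ((fun x => m + x) ∘ (· - m)) = fun b => m + (b - m) from rfl]
      calc H.image (fun b => m + (b - m)) = H.image id := by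
            apply Finset.image_congr
            intro b hb; have := hHb b hb; simp; omega
        _ = H := Finset.image_id
    have hgf : gfold m H' = H' ∪ H := by rw [gfold_eq hm1 _ hH'sub, himg]
    have hdisjH'H : Disjoint H' H := by
      rw [Finset.disjoint_left]
      intro x hx hx'
      have h1 := mem_Icc.1 (hH'sub hx)
      have h2 := hHb x hx'
      omega
    have hdisjAH : Disjoint A H := by
      rw [Finset.disjoint_left]
      intro x hx hx'
      have h1 := mem_Icc.1 (hAsub hx)
      have h2 := hHb x hx'
      omega
    have hAH : A ∪ H = y \ {m} := by
      ext a
      simp only [hA, hH, Finset.mem_union, Finset.mem_inter, mem_Icc,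
        Finset.mem_sdiff, Finset.mem_singleton]
      constructor
      · rintro (⟨h1, h2⟩ | ⟨h1, h2⟩) <;> exact ⟨h1, by omega⟩
      · rintro ⟨h1, h2⟩
        have := hyb a h1
        rcases Nat.lt_or_ge a m with h | h
        · exact Or.inl ⟨h1, by omega⟩
        · exact Or.inr ⟨h1, by omega⟩
    set z := A ∆ H' with hz
    have hzsub : z ⊆ Icc 1 (m-1) :=
      (symmDiff_le_sup (a := A) (b := H')).trans (Finset.union_subset hAsub hH'sub)
    have key : gfold m H' ∆ z = A ∆ H := by
      rw [hgf, ← Finset.sup_eq_union, ← hdisjH'H.symmDiff_eq_sup, hz, sdalg H' H A]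
    have hBsub : Bk (k+1) ⊆ Bk (k+2) := by
      rw [show Bk (k+2) = Bk (k + 1) ∪
        (Finset.Icc 1 (2 ^ (k + 1) - 1)).image (fun j => ({j, 2 ^ (k + 1) + j} : Finset ℕ)) from rfl]
      exact Finset.subset_union_left
    by_cases hmem : m ∈ y
    · -- i will be ≥ m
      have hy2 : y = (A ∆ H) ∆ {m} := by
        rw [hdisjAH.symmDiff_eq_sup, Finset.sup_eq_union, hAH]
        have : Disjoint (y \ {m}) ({m} : Finset ℕ) := Finset.sdiff_disjoint
        rw [this.symmDiff_eq_sup, Finset.sup_eq_union]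
        rw [Finset.sdiff_union_self_eq_union]
        exact (Finset.union_eq_left.2 (by simp [hmem])).symm
      obtain ⟨x', hx', t, ht, hw⟩ := ih (z ∆ Icc 1 (m-1))
        ((symmDiff_le_sup).trans (Finset.union_subset hzsub (le_refl _)))
      have hzeq : z = x' ∆ Icc 1 t ∆ Icc 1 (m-1) := by
        rw [← hw, symmDiff_symmDiff_cancel_right]
      have hIcc : Icc 1 (m-1) ∆ {m} = Icc 1 (m+t) ∆ Icc (m+1) (m+t) := by
        ext a
        simp only [Finset.mem_symmDiff, mem_Icc, Finset.mem_singleton]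
        omega
      have hgt : gfold m (Icc 1 t) = Icc 1 t ∆ Icc (m+1) (m+t) := by
        have hsub : Icc 1 t ⊆ Icc 1 (m-1) := Finset.Icc_subset_Icc_right (by omega)
        rw [gfold_eq hm1 _ hsub]
        rw [show ((m + ·) : ℕ → ℕ) = (fun x => m + x) from rfl]
        rw [Finset.image_add_left_Icc]
        have hd : Disjoint (Icc 1 t) (Icc (m+1) (m+t)) := by
          rw [Finset.disjoint_left]; intro a ha ha'
          have := mem_Icc.1 ha; have := mem_Icc.1 ha'; omega
        rw [hd.symmDiff_eq_sup, Finset.sup_eq_union]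
      refine ⟨gfold m H' ∆ (x' ∆ gfold m (Icc 1 t)),
        symmDiff_mem_spanSD (gfold_mem hH'sub)
          (symmDiff_mem_spanSD (spanSD_mono hBsub hx')
            (gfold_mem (Finset.Icc_subset_Icc_right (by omega)))),
        m + t, by omega, ?_⟩
      rw [symmDiff_assoc, symmDiff_assoc]
      rw [hy2, ← key, symmDiff_assoc]
      congr 1
      rw [hzeq, symmDiff_assoc, symmDiff_assoc, hIcc]
      congr 1
      rw [hgt]
      rw [sdalg2 (Icc 1 t) (Icc 1 (m+t)) (Icc (m+1) (m+t))]
    · -- i ≤ m - 1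
      have hy2 : y = A ∆ H := by
        rw [hdisjAH.symmDiff_eq_sup, Finset.sup_eq_union, hAH,
          (Finset.erase_eq y m).symm.trans (Finset.erase_eq_of_notMem hmem)]
      obtain ⟨x', hx', i, hi, hzx⟩ := ih z hzsub
      refine ⟨gfold m H' ∆ x',
        symmDiff_mem_spanSD (gfold_mem hH'sub) (spanSD_mono hBsub hx'),
        i, by omega, ?_⟩
      rw [symmDiff_assoc, ← hzx, key, ← hy2]

lemma Bk_card : ∀ k : ℕ, (Bk (k+1)).card ≤ 2^(k+1) - 1 - (k+1) := by
  intro k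
  induction k with
  | zero => simp [Bk]
  | succ k ih =>
    show (Bk (k+2)).card ≤ 2^(k+2) - 1 - (k+2)
    have h1 : (Bk (k+2)).card ≤ (Bk (k+1)).card + 2^(k+1) - 1 := by
      rw [show Bk (k+2) = Bk (k + 1) ∪
        (Finset.Icc 1 (2 ^ (k + 1) - 1)).image (fun j => ({j, 2 ^ (k + 1) + j} : Finset ℕ)) from rfl]
      have h2 := Finset.card_union_le (Bk (k+1))
        ((Finset.Icc 1 (2 ^ (k + 1) - 1)).image (fun j => ({j, 2 ^ (k + 1) + j} : Finset ℕ)))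
      have h3 := Finset.card_image_le (s := Finset.Icc 1 (2 ^ (k + 1) - 1))
        (f := fun j => ({j, 2 ^ (k + 1) + j} : Finset ℕ))
      rw [Nat.card_Icc] at h3
      have h4 : 1 ≤ 2^(k+1) := Nat.one_le_two_pow
      omega
    have h5 : k + 2 ≤ 2^(k+1) := Nat.lt_two_pow_self (n := k+1)
    have h6 : (2:ℕ)^(k+2) = 2 * 2^(k+1) := by rw [pow_succ]; ring
    omega

lemma Bk_subset_Icc : ∀ k : ℕ, ∀ s ∈ Bk (k+1), s ⊆ Icc 1 (2^(k+1) - 1) := by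
  intro k
  induction k with
  | zero => simp [Bk]
  | succ k ih =>
    intro s hs
    rw [show Bk (k+2) = Bk (k + 1) ∪
        (Finset.Icc 1 (2 ^ (k + 1) - 1)).image (fun j => ({j, 2 ^ (k + 1) + j} : Finset ℕ)) from rfl,
      Finset.mem_union] at hs
    have h4 : 1 ≤ 2^(k+1) := Nat.one_le_two_pow
    have h6 : (2:ℕ)^(k+2) = 2 * 2^(k+1) := by rw [pow_succ]; ring
    rcases hs with hs | hs
    · exact (ih s hs).trans (Finset.Icc_subset_Icc_right (by omega))
    · obtain ⟨j, hj, rfl⟩ := Finset.mem_image.1 hs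
      rw [mem_Icc] at hj
      intro a ha
      rw [mem_Icc]
      rcases Finset.mem_insert.1 ha with rfl | ha
      · omega
      · rw [Finset.mem_singleton] at ha; omega

lemma spanFin_card_le (X : Finset (Finset ℕ)) : (spanFin X).card ≤ 2^(X.card) := by
  refine Finset.card_image_le.trans ?_
  rw [Finset.card_powerset]

lemma spanFin_subset {X : Finset (Finset ℕ)} {U : Finset ℕ} (h : ∀ s ∈ X, s ⊆ U)
    {x : Finset ℕ} (hx : x ∈ spanFin X) : x ⊆ U := by
  obtain ⟨S, hS, rfl⟩ := Finset.mem_image.1 hx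
  rw [Finset.mem_powerset] at hS
  exact sdFold_subset (fun s hs => h s (hS hs))

/-- (Ramras) For `k ≥ 1` and `n = 2^k`, every subset `y ⊆ [n−1]` can be written as
`y = x ∆ [i]` for a unique pair `(x, i)` with `x ∈ ⟨B_k⟩` and `0 ≤ i ≤ n−1`; i.e., the
isometric paths `P(x)`, `x ∈ ⟨B_k⟩`, partition the vertex set of `Q_{n−1}`. -/
theorem stmt_5 (k : ℕ) (hk : 1 ≤ k) (n : ℕ) (hn : n = 2 ^ k)
    (y : Finset ℕ) (hy : y ⊆ Finset.Icc 1 (n - 1)) :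
    ∃! p : Finset ℕ × ℕ,
      p.1 ∈ spanSD (Bk k) ∧ p.2 ≤ n - 1 ∧ y = p.1 ∆ Finset.Icc 1 p.2 := by
  obtain ⟨k', rfl⟩ : ∃ k', k = k' + 1 := ⟨k - 1, by omega⟩
  subst hn
  set k := k' + 1 with hkdef
  set n := 2 ^ k with hndef
  have hn2 : 2 ≤ n := by
    rw [hndef]; calc 2 = 2^1 := rfl
    _ ≤ 2^k := Nat.pow_le_pow_right (by norm_num) (by omega)
  -- existence
  obtain ⟨x, hx, i, hi, hyeq⟩ := exists_rep k' y hy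
  -- injectivity setup
  set s : Finset (Finset ℕ × ℕ) := spanFin (Bk k) ×ˢ Finset.range n with hs
  set t : Finset (Finset ℕ) := (Finset.Icc 1 (n-1)).powerset with ht
  have hBIcc : ∀ u ∈ Bk k, u ⊆ Icc 1 (n - 1) := Bk_subset_Icc k'
  have hmem_s : ∀ p : Finset ℕ × ℕ, p.1 ∈ spanSD (Bk k) → p.2 ≤ n - 1 → p ∈ s := by
    intro p h1 h2
    rw [hs, Finset.mem_product, Finset.mem_range]
    exact ⟨spanSD_subset_spanFin _ h1, by omega⟩
  have hmapsto : ∀ p ∈ s, p.1 ∆ Finset.Icc 1 p.2 ∈ t := by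
    intro p hp
    rw [hs, Finset.mem_product, Finset.mem_range] at hp
    rw [ht, Finset.mem_powerset]
    refine (symmDiff_le_sup (a := p.1) (b := Finset.Icc 1 p.2)).trans (Finset.union_subset ?_ ?_)
    · exact spanFin_subset hBIcc hp.1
    · exact Finset.Icc_subset_Icc_right (by omega)
  have hsurj : ∀ b ∈ t, ∃ p ∈ s, p.1 ∆ Finset.Icc 1 p.2 = b := by
    intro b hb
    rw [ht, Finset.mem_powerset] at hb
    obtain ⟨x', hx', i', hi', hb'⟩ := exists_rep k' b hb
    exact ⟨(x', i'), hmem_s _ hx' hi', hb'.symm⟩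
  have hcard : s.card ≤ t.card := by
    rw [hs, ht, Finset.card_product, Finset.card_range, Finset.card_powerset, Nat.card_Icc]
    have h1 : (spanFin (Bk k)).card ≤ 2^(2^k - 1 - k) :=
      (spanFin_card_le _).trans (Nat.pow_le_pow_right (by norm_num) (Bk_card k'))
    have h2 : (2:ℕ)^(2^k - 1 - k) * 2^k = 2^(2^k - 1) := by
      rw [← pow_add]
      congr 1
      have := Nat.lt_two_pow_self (n := k)
      omega
    calc (spanFin (Bk k)).card * n ≤ 2^(2^k - 1 - k) * 2^k :=
          Nat.mul_le_mul h1 (le_of_eq hndef.symm)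
      _ = 2^(2^k - 1) := h2
      _ = 2^(n - 1 + 1 - 1) := by congr 1
  have hinj := Finset.inj_on_of_surj_on_of_card_le
    (s := s) (t := t) (fun p _ => p.1 ∆ Finset.Icc 1 p.2)
    (fun p hp => hmapsto p hp) (fun b hb => by
      obtain ⟨p, hp, hpe⟩ := hsurj b hb; exact ⟨p, hp, hpe⟩) hcard
  refine ⟨(x, i), ⟨hx, hi, hyeq⟩, ?_⟩
  rintro q ⟨hq1, hq2, hq3⟩
  exact hinj (hmem_s q hq1 hq2) (hmem_s (x, i) hx hi) (hq3.symm.trans hyeq)
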